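/- arXiv:2605.12844 — 2 statements merged into one kernel-verified Lean document; each statement's English description precedes it below -/
import Mathlib

section
/- Let d, s, n be positive integers and fix an initial ensemble Z_0 in (ℝ^d)^n (all n rows may be equal to a common starting point). Let φ : ℝ^d × [0,1)^s → ℝ^d be a measurable one-step update map and let Φ : (ℝ^d)^n × ([0,1)^s)^n → (ℝ^d)^n apply φ row by row, i.e. Φ(Z, X)_i = φ(Z_i, X_i) for i = 1,…,n. Let π : (ℝ^d)^n → Sym(n) be any measurable permutation-valued sorting rule (in the paper, the rule induced by sorting Hilbert-curve keys of the rows; the proof uses only measurability). Let (X_k)_{k≥1} and (X'_k)_{k≥1} be two families of random n×s arrays, each array having n independent rows uniformly distributed on [0,1)^s, with arrays independent across k and the two families independent of everything else. Define the plain Monte Carlo chain Z_k^{MC} = Φ(Z_{k−1}^{MC}, X_k) with Z_0^{MC} = Z_0, and the array chain Z_k^{AMC} = Φ(Z_{k−1}^{AMC}, σ_k · X'_k) with Z_0^{AMC} = Z_0, where σ_k = π(Z_{k−1}^{AMC}) and σ · X denotes the array whose i-th row is the σ(i)-th row of X. Then for every k ≥ 0, the random ensembles Z_k^{MC} and Z_k^{AMC}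 have the same distribution on (ℝ^d)^n. -/
/-!
Both chains are driven by fresh innovations: the ensemble at time `k` is a measurable function of
the arrays used up to time `k`, hence independent of the next array, whose law is the product
`ν = (Unif [0,1)^s)^n`. So the law of `Z_{k+1}` is obtained from the law `ρ` of `Z_k` as the image
of `ρ ⊗ ν` under the update. For the array chain the update first applies the skew map
`(z, x) ↦ (z, x ∘ π z)`, which preserves `ρ ⊗ ν` because `ν` is invariant under every
permutation of the rows. Both laws therefore satisfy the same recursion from the same start.
-/

open MeasureTheory ProbabilityTheory

section PermuteRows

variable {E α : Type*} [MeasurableSpace E] [MeasurableSpace α] {n : ℕ}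

lemma measurable_prodMk_comp_perm {π : E → Equiv.Perm (Fin n)}
    (hπ : ∀ σ, MeasurableSet {e | π e = σ}) :
    Measurable fun p : E × (Fin n → α) => (p.1, p.2 ∘ π p.1) := by
  refine measurable_fst.prodMk fun s hs => ?_
  have hcover : (fun p : E × (Fin n → α) => p.2 ∘ π p.1) ⁻¹' s
      = ⋃ σ, {e | π e = σ} ×ˢ ((· ∘ σ) ⁻¹' s) := by
    ext ⟨e, x⟩
    simp
  rw [hcover]
  have hcomp (σ : Equiv.Perm (Fin n)) : Measurable fun x : Fin n → α => x ∘ σ := by fun_prop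
  exact .iUnion fun σ => (hπ σ).prod (hcomp σ hs)

lemma MeasureTheory.Measure.map_comp_perm_pi (μ : Measure α) [SigmaFinite μ]
    (σ : Equiv.Perm (Fin n)) :
    (Measure.pi fun _ : Fin n => μ).map (· ∘ σ) = Measure.pi fun _ : Fin n => μ :=
  (measurePreserving_arrowCongr' (fun _ => μ) (fun _ => μ) σ.symm (MeasurableEquiv.refl α)
    fun _ => .id μ).map_eq

lemma MeasureTheory.Measure.map_prodMk_comp_perm_prod {π : E → Equiv.Perm (Fin n)}
    (hπ : ∀ σ, MeasurableSet {e | π e = σ}) (ρ : Measure E) [SFinite ρ]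
    {ν : Measure (Fin n → α)} [SFinite ν]
    (hν : ∀ σ : Equiv.Perm (Fin n), ν.map (· ∘ σ) = ν) :
    (ρ.prod ν).map (fun p => (p.1, p.2 ∘ π p.1)) = ρ.prod ν :=
  (MeasurePreserving.id ρ |>.skew_product (measurable_prodMk_comp_perm hπ).snd
    (.of_forall fun e => hν (π e))).map_eq

end PermuteRows

section RowDrivenRecursion

variable {Ω α γ : Type*} [MeasurableSpace α] [MeasurableSpace γ] {n : ℕ} {W : ℕ → Ω → Fin n → α}

def rows (W : ℕ → Ω → Fin n → α) (p : ℕ × Fin n) (ω : Ω) : α := W p.1 ω p.2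

abbrev rowsUpTo (W : ℕ → Ω → Fin n → α) (k : ℕ) : MeasurableSpace Ω :=
  ⨆ p ∈ {p : ℕ × Fin n | p.1 ≤ k}, MeasurableSpace.comap (rows W p) inferInstance

lemma measurable_iSup_comap_rows {S : Set (ℕ × Fin n)} {j : ℕ} (hS : ∀ i, (j, i) ∈ S) :
    Measurable[⨆ p ∈ S, MeasurableSpace.comap (rows W p) inferInstance] (W j) := by
  -- made a local instance so that `measurable_pi_lambda` picks it up on the domain
  let m : MeasurableSpace Ω := ⨆ p ∈ S, MeasurableSpace.comap (rows W p) inferInstance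
  refine measurable_pi_lambda _ fun i => (comap_measurable (rows W (j, i))).mono ?_ le_rfl
  exact le_iSup₂ (f := fun p (_ : p ∈ S) => MeasurableSpace.comap (rows W p) inferInstance)
    (j, i) (hS i)

lemma measurable_rowsUpTo_of_recursion {Z : ℕ → Ω → γ} {z₀ : γ} {G : γ × (Fin n → α) → γ}
    (hZ0 : ∀ ω, Z 0 ω = z₀) (hG : Measurable G)
    (hZ : ∀ k ω, Z (k + 1) ω = G (Z k ω, W (k + 1) ω)) (k : ℕ) :
    Measurable[rowsUpTo W k] (Z k) := by
  induction k with
  | zero => exact funext hZ0 ▸ measurable_const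
  | succ k ih =>
    have hmono : rowsUpTo W k ≤ rowsUpTo W (k + 1) :=
      biSup_mono fun p (hp : p.1 ≤ k) => Nat.le_succ_of_le hp
    rw [show Z (k + 1) = G ∘ fun ω => (Z k ω, W (k + 1) ω) from funext (hZ k)]
    exact hG.comp ((ih.mono hmono le_rfl).prodMk
      (measurable_iSup_comap_rows fun _ => le_refl (k + 1)))

variable [MeasurableSpace Ω] {P : Measure Ω}

lemma measurable_rows (hW : ∀ k, Measurable (W k)) (p : ℕ × Fin n) : Measurable (rows W p) :=
  (measurable_pi_apply p.2).comp (hW p.1)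

lemma indepFun_of_rowsUpTo (hind : iIndepFun (rows W) P) (hW : ∀ k, Measurable (W k))
    {Z : Ω → γ} {k : ℕ} (hZ : Measurable[rowsUpTo W k] Z) : IndepFun Z (W (k + 1)) P := by
  have hnext : Measurable[⨆ p ∈ {p : ℕ × Fin n | p.1 = k + 1},
      MeasurableSpace.comap (rows W p) inferInstance] (W (k + 1)) :=
    measurable_iSup_comap_rows fun _ => rfl
  have hpast_future := indep_iSup_of_disjoint (fun p => (measurable_rows hW p).comap_le) hind
    (S := {p : ℕ × Fin n | p.1 ≤ k}) (T := {p | p.1 = k + 1})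
    (Set.disjoint_left.mpr fun p (hp : p.1 ≤ k) (hq : p.1 = k + 1) => by omega)
  rw [IndepFun_iff_Indep]
  exact indep_of_indep_of_le_right (indep_of_indep_of_le_left hpast_future hZ.comap_le)
    hnext.comap_le

lemma map_array_eq_pi [IsProbabilityMeasure P] (hind : iIndepFun (rows W) P)
    (hW : ∀ k, Measurable (W k)) {μ : Measure α} (hμ : ∀ p, P.map (rows W p) = μ) (k : ℕ) :
    P.map (W k) = Measure.pi fun _ : Fin n => μ := by
  have hrow_k : iIndepFun (fun i : Fin n => rows W (k, i)) P :=
    hind.precomp fun i j hij => (Prod.ext_iff.mp hij).2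
  rw [← funext fun i => hμ (k, i)]
  exact hrow_k.map_fun_eq_pi_map fun i => (measurable_rows hW (k, i)).aemeasurable

lemma map_succ_eq_map_prod_of_recursion [IsProbabilityMeasure P] (hind : iIndepFun (rows W) P)
    (hW : ∀ k, Measurable (W k)) {μ : Measure α} (hμ : ∀ p, P.map (rows W p) = μ)
    {Z : ℕ → Ω → γ} {z₀ : γ} {G : γ × (Fin n → α) → γ}
    (hZ0 : ∀ ω, Z 0 ω = z₀) (hG : Measurable G)
    (hZ : ∀ k ω, Z (k + 1) ω = G (Z k ω, W (k + 1) ω)) (k : ℕ) :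
    P.map (Z (k + 1)) = ((P.map (Z k)).prod (Measure.pi fun _ : Fin n => μ)).map G := by
  have hZk := measurable_rowsUpTo_of_recursion hZ0 hG hZ k
  have hZk_meas : Measurable (Z k) :=
    hZk.mono (iSup₂_le fun p _ => (measurable_rows hW p).comap_le) le_rfl
  rw [show Z (k + 1) = G ∘ fun ω => (Z k ω, W (k + 1) ω) from funext (hZ k),
    ← Measure.map_map hG (hZk_meas.prodMk (hW (k + 1))),
    (indepFun_of_rowsUpTo hind hW hZk).map_prod_eq_prod_map_map hZk_meas.aemeasurable
      (hW (k + 1)).aemeasurable, map_array_eq_pi hind hW hμ]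

end RowDrivenRecursion

theorem stmt_0_general {Ω : Type*} [MeasurableSpace Ω] (P : Measure Ω) [IsProbabilityMeasure P]
    (d s n : ℕ)
    (Z0 : Fin n → Fin d → ℝ)
    (φ : (Fin d → ℝ) × (Fin s → ℝ) → Fin d → ℝ) (hφ : Measurable φ)
    (π : (Fin n → Fin d → ℝ) → Equiv.Perm (Fin n))
    (hπ : ∀ σ : Equiv.Perm (Fin n), MeasurableSet {E : Fin n → Fin d → ℝ | π E = σ})
    (X X' : ℕ → Ω → Fin n → Fin s → ℝ)
    (hXmeas : ∀ k, Measurable (X k)) (hX'meas : ∀ k, Measurable (X' k))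
    (hiid : iIndepFun
      (Sum.elim (fun (p : ℕ × Fin n) (ω : Ω) => X p.1 ω p.2)
        (fun (p : ℕ × Fin n) (ω : Ω) => X' p.1 ω p.2)) P)
    (hunif : ∀ q : (ℕ × Fin n) ⊕ (ℕ × Fin n),
      Measure.map
          (Sum.elim (fun p (ω : Ω) => X p.1 ω p.2) (fun p (ω : Ω) => X' p.1 ω p.2) q) P
        = Measure.pi fun _ : Fin s => volume.restrict (Set.Ico (0 : ℝ) 1))
    (ZMC ZAMC : ℕ → Ω → Fin n → Fin d → ℝ)
    (hMC0 : ∀ ω, ZMC 0 ω = Z0)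
    (hMC : ∀ k ω i, ZMC (k + 1) ω i = φ (ZMC k ω i, X (k + 1) ω i))
    (hAMC0 : ∀ ω, ZAMC 0 ω = Z0)
    (hAMC : ∀ k ω i,
      ZAMC (k + 1) ω i = φ (ZAMC k ω i, X' (k + 1) ω (π (ZAMC k ω) i))) :
    ∀ k : ℕ, Measure.map (ZMC k) P = Measure.map (ZAMC k) P := by
  let Φ : (Fin n → Fin d → ℝ) × (Fin n → Fin s → ℝ) → Fin n → Fin d → ℝ :=
    fun p i => φ (p.1 i, p.2 i)
  have hΦ : Measurable Φ := by fun_prop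
  have hsort := measurable_prodMk_comp_perm (α := Fin s → ℝ) hπ
  have hX_rows : iIndepFun (rows X) P := hiid.precomp (g := Sum.inl) Sum.inl_injective
  have hX'_rows : iIndepFun (rows X') P := hiid.precomp (g := Sum.inr) Sum.inr_injective
  have hMC_step := map_succ_eq_map_prod_of_recursion hX_rows hXmeas (fun p => hunif (.inl p))
    hMC0 hΦ fun k ω => funext (hMC k ω)
  have hAMC_step := map_succ_eq_map_prod_of_recursion hX'_rows hX'meas (fun p => hunif (.inr p))
    hAMC0 (hΦ.comp hsort) fun k ω => funext (hAMC k ω)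
  intro k
  induction k with
  | zero => rw [funext hMC0, funext hAMC0]
  | succ k ih =>
    rw [hMC_step, hAMC_step, ih, ← Measure.map_map hΦ hsort,
      Measure.map_prodMk_comp_perm_prod hπ _ fun σ => Measure.map_comp_perm_pi _ σ]

/-- let `Φ` apply a measurable one-step update map
`φ : ℝ^d × [0,1)^s → ℝ^d` row by row to an ensemble of `n` walkers, and let
`π` be a measurable permutation-valued sorting rule (e.g. the Hilbert-curve
sort; measurability expressed via level sets).  Drive the plain Monte Carlo
chain `Z_k^{MC} = Φ(Z_{k−1}^{MC}, X_k)` and the array chain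
`Z_k^{AMC} = Φ(Z_{k−1}^{AMC}, π(Z_{k−1}^{AMC})·X'_k)` from the same initial
ensemble `Z₀`, where the rows of all the arrays `X_k, X'_k` (indexed by
`(ℕ × Fin n) ⊕ (ℕ × Fin n)`) are mutually independent and uniform on `[0,1)^s`,
and `(σ·X)ᵢ = X_{σ(i)}`.  Then for every `k`, the ensembles `Z_k^{MC}` and
`Z_k^{AMC}` have the same distribution on `(ℝ^d)^n`. -/
theorem stmt_0 {Ω : Type*} [MeasurableSpace Ω] (P : Measure Ω) [IsProbabilityMeasure P]
    (d s n : ℕ) (hd : 0 < d) (hs : 0 < s) (hn : 0 < n)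
    (Z0 : Fin n → Fin d → ℝ)
    (φ : (Fin d → ℝ) × (Fin s → ℝ) → Fin d → ℝ) (hφ : Measurable φ)
    (π : (Fin n → Fin d → ℝ) → Equiv.Perm (Fin n))
    (hπ : ∀ σ : Equiv.Perm (Fin n), MeasurableSet {E : Fin n → Fin d → ℝ | π E = σ})
    (X X' : ℕ → Ω → Fin n → Fin s → ℝ)
    (hXmeas : ∀ k, Measurable (X k)) (hX'meas : ∀ k, Measurable (X' k))
    (hiid : iIndepFun
      (Sum.elim (fun (p : ℕ × Fin n) (ω : Ω) => X p.1 ω p.2)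
        (fun (p : ℕ × Fin n) (ω : Ω) => X' p.1 ω p.2)) P)
    (hunif : ∀ q : (ℕ × Fin n) ⊕ (ℕ × Fin n),
      Measure.map
          (Sum.elim (fun p (ω : Ω) => X p.1 ω p.2) (fun p (ω : Ω) => X' p.1 ω p.2) q) P
        = Measure.pi fun _ : Fin s => volume.restrict (Set.Ico (0 : ℝ) 1))
    (ZMC ZAMC : ℕ → Ω → Fin n → Fin d → ℝ)
    (hMC0 : ∀ ω, ZMC 0 ω = Z0)
    (hMC : ∀ k ω i, ZMC (k + 1) ω i = φ (ZMC k ω i, X (k + 1) ω i))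
    (hAMC0 : ∀ ω, ZAMC 0 ω = Z0)
    (hAMC : ∀ k ω i,
      ZAMC (k + 1) ω i = φ (ZAMC k ω i, X' (k + 1) ω (π (ZAMC k ω) i))) :
    ∀ k : ℕ, Measure.map (ZMC k) P = Measure.map (ZAMC k) P :=
  stmt_0_general P d s n Z0 φ hφ π hπ X X' hXmeas hX'meas hiid hunif ZMC ZAMC hMC0 hMC hAMC0 hAMC
end

section
/- Let f ∈ L²([0,1]^d) with ANOVA variance components σ_u², and fix j ∈ {1,…,d}. For x ∈ [0,1]^d and z_j ∈ [0,1], let x_{−j}:z_j denote the point obtained from x by replacing its j-th coordinate with z_j. Then the total Sobol' index of coordinate j satisfies Jansen's identity: ∑_{u : j ∈ u} σ_u² = (1/2) ∫_{[0,1]^d} ∫_0^1 ( f(x) − f(x_{−j}:z_j) )² dz_j dx. -/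
/-!
Put `g = ∑_{u ∋ j} f_u`. Since `∑_{v ⊆ u} f_v` is the mean of `f` over the coordinates outside `u`,
`f - g` is the mean of `f` over `x_j` alone, so `f(x) - f(x_{-j}:z_j) = g(x) - g(x_{-j}:z_j)`.
Every effect `f_u` with `j ∈ u` has mean zero in `x_j`. Hence distinct effects are orthogonal, which
gives `∫ g² = ∑_{u ∋ j} σ_u²`, and the cross term of `(g(x) - g(x_{-j}:z_j))²` integrates to zero,
which leaves `2 ∫ g²`.
-/

open MeasureTheory

/-- The uniform probability measure on the cube `[0,1]^d`. -/
noncomputable def cubeMeasure (d : ℕ) : Measure (Fin d → ℝ) :=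
  Measure.pi fun _ => volume.restrict (Set.Icc (0 : ℝ) 1)

/-- The ANOVA (Sobol'–Hoeffding) effect `f_u` of `f : [0,1]^d → ℝ`, defined
recursively by `f_u(x) = ∫ f(x) dx_{−u} − ∑_{v ⊊ u} f_v(x)`: the integral of `f`
over the coordinates outside `u` (the coordinates in `u` being frozen at `x`),
minus the effects of all proper subsets.  In particular `f_∅ ≡ ∫ f`. -/
noncomputable def anova {d : ℕ} (f : (Fin d → ℝ) → ℝ) (u : Finset (Fin d))
    (x : Fin d → ℝ) : ℝ :=
  (∫ y, f (fun i => if i ∈ u then x i else y i) ∂cubeMeasure d) -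
    ∑ v ∈ u.ssubsets.attach, anova f v.1 x
termination_by u.card
decreasing_by
  exact Finset.card_lt_card (Finset.mem_ssubsets.mp v.2)

section Integral

variable {Ω : Type*} [MeasurableSpace Ω] {ν : Measure Ω}

theorem MeasureTheory.MeasurePreserving.integral_comp_of_aestronglyMeasurable {Ω' : Type*}
    [MeasurableSpace Ω'] {ν' : Measure Ω'} {T : Ω → Ω'} (hT : MeasurePreserving T ν ν') {g : Ω' → ℝ} (hg : AEStronglyMeasurable g ν') :
    ∫ ω, g (T ω) ∂ν = ∫ ω', g ω' ∂ν' := by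
  rw [← hT.map_eq] at hg ⊢
  exact (integral_map hT.measurable.aemeasurable hg).symm

theorem sq_integral_le_integral_sq [IsProbabilityMeasure ν] {g : Ω → ℝ} (hg : MemLp g 2 ν) :
    (∫ ω, g ω ∂ν) ^ 2 ≤ ∫ ω, g ω ^ 2 ∂ν := by
  have := ProbabilityTheory.variance_nonneg g ν
  rw [ProbabilityTheory.variance_eq_sub hg] at this
  simpa using this

theorem integral_sq_sum_of_orthogonal {κ : Type*} (s : Finset κ) {F : κ → Ω → ℝ}
    (hF : ∀ k ∈ s, MemLp (F k) 2 ν)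
    (horth : ∀ k ∈ s, ∀ l ∈ s, k ≠ l → ∫ ω, F k ω * F l ω ∂ν = 0) :
    ∫ ω, (∑ k ∈ s, F k ω) ^ 2 ∂ν = ∑ k ∈ s, ∫ ω, F k ω ^ 2 ∂ν := by
  have hint : ∀ k ∈ s, ∀ l ∈ s, Integrable (fun ω => F k ω * F l ω) ν :=
    fun k hk l hl => (hF k hk).integrable_mul (hF l hl)
  simp only [sq, Finset.sum_mul_sum]
  rw [integral_finsetSum _ fun k hk => integrable_finsetSum _ fun l hl => hint k hk l hl]
  refine Finset.sum_congr rfl fun k hk => ?_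
  rw [integral_finsetSum _ fun l hl => hint k hk l hl,
    Finset.sum_eq_single_of_mem k hk fun l hl hlk => horth k hk l hl (Ne.symm hlk)]

end Integral

section PiMeasure

variable {ι : Type*} [DecidableEq ι] {α : ι → Type*} [∀ i, MeasurableSpace (α i)]

theorem measurable_piecewise_prod (u : Finset ι) :
    Measurable fun p : (∀ i, α i) × (∀ i, α i) => u.piecewise p.1 p.2 := by
  refine measurable_pi_lambda _ fun i => ?_
  by_cases hi : i ∈ u <;> simp only [hi, Finset.piecewise_eq_of_mem,
    Finset.piecewise_eq_of_notMem, not_false_eq_true] <;> fun_prop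

variable [Fintype ι] {μ : ∀ i, Measure (α i)} [∀ i, IsProbabilityMeasure (μ i)]

theorem measurePreserving_piecewise (u : Finset ι) :
    MeasurePreserving (fun p : (∀ i, α i) × (∀ i, α i) => u.piecewise p.1 p.2)
      ((Measure.pi μ).prod (Measure.pi μ)) (Measure.pi μ) := by
  refine ⟨measurable_piecewise_prod u, (Measure.pi_eq fun s hs => ?_).symm⟩
  have hpre : (fun p : (∀ i, α i) × (∀ i, α i) => u.piecewise p.1 p.2) ⁻¹' Set.univ.pi s =
      Set.univ.pi (u.piecewise s fun _ => Set.univ) ×ˢ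
        Set.univ.pi (u.piecewise (fun _ => Set.univ) s) := by
    ext p
    simp only [Set.mem_preimage, Set.mem_prod, Set.mem_univ_pi, ← forall_and]
    refine forall_congr' fun i => ?_
    by_cases hi : i ∈ u <;> simp [hi]
  rw [Measure.map_apply (measurable_piecewise_prod u) (.univ_pi hs), hpre, Measure.prod_prod,
    Measure.pi_pi, Measure.pi_pi, ← Finset.prod_mul_distrib]
  refine Finset.prod_congr rfl fun i _ => ?_
  by_cases hi : i ∈ u <;> simp [hi]

theorem measurePreserving_update (j : ι) :
    MeasurePreserving (fun p : (∀ i, α i) × α j => Function.update p.1 j p.2)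
      ((Measure.pi μ).prod (μ j)) (Measure.pi μ) := by
  refine ⟨measurable_update', (Measure.pi_eq fun s hs => ?_).symm⟩
  have hpre : (fun p : (∀ i, α i) × α j => Function.update p.1 j p.2) ⁻¹' Set.univ.pi s =
      Set.univ.pi (Function.update s j Set.univ) ×ˢ s j := by
    ext p
    simp only [Set.mem_preimage, Set.mem_prod, Set.mem_univ_pi]
    constructor
    · intro h
      refine ⟨fun i => ?_, by simpa using h j⟩
      by_cases hi : i = j
      · subst hi; simp
      · simpa [hi] using h i
    · rintro ⟨h, hj⟩ i
      by_cases hi : i = j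
      · subst hi; simpa using hj
      · simpa [hi] using h i
  rw [Measure.map_apply measurable_update' (.univ_pi hs), hpre, Measure.prod_prod,
    Measure.pi_pi, ← Finset.prod_erase_mul _ _ (Finset.mem_univ j),
    ← Finset.prod_erase_mul _ _ (Finset.mem_univ j)]
  simp only [Function.update_self, measure_univ, mul_one]
  congr 1
  exact Finset.prod_congr rfl fun i hi => by rw [Function.update_of_ne (Finset.ne_of_mem_erase hi)]

theorem ae_integrable_comp_update {g : (∀ i, α i) → ℝ} (hg : Integrable g (Measure.pi μ))
    (j : ι) : ∀ᵐ x ∂Measure.pi μ, Integrable (fun z => g (Function.update x j z)) (μ j) :=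
  (((measurePreserving_update j).integrable_comp hg.1).mpr hg).prod_right_ae

theorem integral_eq_integral_integral_update {g : (∀ i, α i) → ℝ}
    (hg : Integrable g (Measure.pi μ)) (j : ι) :
    ∫ x, g x ∂Measure.pi μ = ∫ x, ∫ z, g (Function.update x j z) ∂μ j ∂Measure.pi μ := by
  have hU := measurePreserving_update (μ := μ) j
  rw [← integral_prod (fun p => g (Function.update p.1 j p.2)) ((hU.integrable_comp hg.1).mpr hg),
    hU.integral_comp_of_aestronglyMeasurable hg.1]

theorem integral_integral_sq_sub_update {g : (∀ i, α i) → ℝ} (hg : MemLp g 2 (Measure.pi μ))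
    (j : ι) (hmean : ∀ᵐ x ∂Measure.pi μ, ∫ z, g (Function.update x j z) ∂μ j = 0) :
    ∫ x, ∫ z, (g x - g (Function.update x j z)) ^ 2 ∂μ j ∂Measure.pi μ =
      2 * ∫ x, g x ^ 2 ∂Measure.pi μ := by
  have hfst : MeasurePreserving (fun p : (∀ i, α i) × α j => p.1)
      ((Measure.pi μ).prod (μ j)) (Measure.pi μ) := measurePreserving_fst
  have hupd := measurePreserving_update (μ := μ) j
  set P := (Measure.pi μ).prod (μ j)
  set upd : (∀ i, α i) × α j → ∀ i, α i := fun p => Function.update p.1 j p.2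
  have h₁ : MemLp (fun p => g p.1) 2 P := hg.comp_measurePreserving hfst
  have h₂ : MemLp (fun p => g (upd p)) 2 P := hg.comp_measurePreserving hupd
  have h₁₂ : Integrable (fun p => g p.1 * g (upd p)) P := h₁.integrable_mul h₂
  have hcross : ∫ p, g p.1 * g (upd p) ∂P = 0 := by
    rw [integral_prod _ h₁₂]
    refine integral_eq_zero_of_ae ?_
    filter_upwards [hmean] with x hx
    simp only [upd, integral_const_mul, hx, mul_zero, Pi.zero_apply]
  calc ∫ x, ∫ z, (g x - g (Function.update x j z)) ^ 2 ∂μ j ∂Measure.pi μ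
      = ∫ p, (g p.1 ^ 2 + g (upd p) ^ 2) - 2 * (g p.1 * g (upd p)) ∂P := by
        rw [← integral_prod (fun p => (g p.1 - g (upd p)) ^ 2) (h₁.sub h₂).integrable_sq]
        congr with p
        ring
    _ = ∫ p, g p.1 ^ 2 ∂P + ∫ p, g (upd p) ^ 2 ∂P - 2 * ∫ p, g p.1 * g (upd p) ∂P := by
        rw [integral_sub (h₁.integrable_sq.fun_add h₂.integrable_sq)
          (h₁₂.const_mul 2), integral_add h₁.integrable_sq h₂.integrable_sq, integral_const_mul]
    _ = 2 * ∫ x, g x ^ 2 ∂Measure.pi μ := by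
        rw [hcross, hfst.integral_comp_of_aestronglyMeasurable (hg.1.fun_pow 2),
          hupd.integral_comp_of_aestronglyMeasurable (hg.1.fun_pow 2)]
        ring

end PiMeasure

instance : IsProbabilityMeasure (volume.restrict (Set.Icc (0 : ℝ) 1)) :=
  ⟨by simp [Real.volume_Icc]⟩

instance (d : ℕ) : IsProbabilityMeasure (cubeMeasure d) := by
  unfold cubeMeasure; infer_instance

variable {d : ℕ}

noncomputable def partialMean (f : (Fin d → ℝ) → ℝ) (u : Finset (Fin d)) (x : Fin d → ℝ) : ℝ :=
  ∫ y, f (u.piecewise x y) ∂cubeMeasure d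

theorem anova_eq_partialMean_sub (f : (Fin d → ℝ) → ℝ) (u : Finset (Fin d)) (x : Fin d → ℝ) :
    anova f u x = partialMean f u x - ∑ v ∈ u.ssubsets, anova f v x := by
  rw [anova, Finset.sum_attach u.ssubsets (fun v => anova f v x)]
  rfl

theorem sum_powerset_anova (f : (Fin d → ℝ) → ℝ) (u : Finset (Fin d)) (x : Fin d → ℝ) :
    ∑ v ∈ u.powerset, anova f v x = partialMean f u x := by
  rw [← Finset.sum_erase_add _ _ (Finset.mem_powerset_self u), anova_eq_partialMean_sub]
  change ∑ v ∈ u.ssubsets, anova f v x + _ = _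
  ring

theorem partialMean_univ (f : (Fin d → ℝ) → ℝ) : partialMean f Finset.univ = f := by
  funext x
  simp [partialMean]

theorem partialMean_update_of_notMem (f : (Fin d → ℝ) → ℝ) {u : Finset (Fin d)} {j : Fin d}
    (hj : j ∉ u) (x : Fin d → ℝ) (z : ℝ) :
    partialMean f u (Function.update x j z) = partialMean f u x := by
  unfold partialMean
  congr! 3 with y
  exact u.piecewise_congr (fun i hi => Function.update_of_ne (ne_of_mem_of_not_mem hi hj) _ _)
    fun _ _ => rfl

theorem anova_update_of_notMem (f : (Fin d → ℝ) → ℝ) {u : Finset (Fin d)} {j : Fin d}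
    (hj : j ∉ u) (x : Fin d → ℝ) (z : ℝ) :
    anova f u (Function.update x j z) = anova f u x := by
  induction u using Finset.strongInduction with
  | H u ih =>
    rw [anova_eq_partialMean_sub, anova_eq_partialMean_sub, partialMean_update_of_notMem f hj]
    congr 1
    refine Finset.sum_congr rfl fun v hv => ?_
    have hvu := Finset.mem_ssubsets.mp hv
    exact ih v hvu fun hjv => hj (hvu.subset hjv)

theorem sum_anova_mem_add_partialMean_erase (f : (Fin d → ℝ) → ℝ) (j : Fin d) (x : Fin d → ℝ) :
    ∑ u ∈ Finset.univ.filter (fun u : Finset (Fin d) => j ∈ u), anova f u x +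
      partialMean f (Finset.univ.erase j) x = f x := by
  have hcompl : (Finset.univ.filter fun u : Finset (Fin d) => j ∉ u) =
      (Finset.univ.erase j).powerset := by
    ext v
    simp [Finset.subset_erase]
  rw [← sum_powerset_anova, ← hcompl, Finset.sum_filter_add_sum_filter_not,
    ← Finset.powerset_univ, sum_powerset_anova, partialMean_univ]

variable {f : (Fin d → ℝ) → ℝ}

theorem memLp_partialMean (hf : MemLp f 2 (cubeMeasure d)) (u : Finset (Fin d)) :
    MemLp (partialMean f u) 2 (cubeMeasure d) := by
  have hF : MemLp (fun p : (Fin d → ℝ) × (Fin d → ℝ) => f (u.piecewise p.1 p.2)) 2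
      ((cubeMeasure d).prod (cubeMeasure d)) :=
    hf.comp_measurePreserving (measurePreserving_piecewise u)
  have hm : AEStronglyMeasurable (partialMean f u) (cubeMeasure d) :=
    hF.1.integral_prod_right'
  rw [memLp_two_iff_integrable_sq hm]
  refine hF.integrable_sq.integral_prod_left.mono' (hm.fun_pow 2) ?_
  filter_upwards [(hF.integrable one_le_two).prod_right_ae, hF.integrable_sq.prod_right_ae]
    with x hx hx2
  rw [Real.norm_of_nonneg (sq_nonneg _)]
  exact sq_integral_le_integral_sq ((memLp_two_iff_integrable_sq hx.1).mpr hx2)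

theorem memLp_anova (hf : MemLp f 2 (cubeMeasure d)) (u : Finset (Fin d)) :
    MemLp (anova f u) 2 (cubeMeasure d) := by
  induction u using Finset.strongInduction with
  | H u ih =>
    rw [show anova f u = partialMean f u - ∑ v ∈ u.ssubsets, anova f v from
      funext fun x => by simp [anova_eq_partialMean_sub f u x]]
    exact (memLp_partialMean hf u).sub
      (memLp_finsetSum' _ fun v hv => ih v (Finset.mem_ssubsets.mp hv))

theorem integral_partialMean_update (hf : Integrable f (cubeMeasure d)) {u : Finset (Fin d)}
    {j : Fin d} (hj : j ∈ u) :
    ∀ᵐ x ∂cubeMeasure d, ∫ z in Set.Icc (0 : ℝ) 1, partialMean f u (Function.update x j z) =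
      partialMean f (u.erase j) x := by
  have hF : Integrable (fun p : (Fin d → ℝ) × (Fin d → ℝ) => f ((u.erase j).piecewise p.1 p.2))
      ((cubeMeasure d).prod (cubeMeasure d)) :=
    ((measurePreserving_piecewise _).integrable_comp hf.1).mpr hf
  have hU := measurePreserving_update (μ := fun _ : Fin d => volume.restrict (Set.Icc (0 : ℝ) 1)) j
  filter_upwards [hF.prod_right_ae] with x hx
  have hswap : ∀ y z, (u.erase j).piecewise x (Function.update y j z) =
      u.piecewise (Function.update x j z) y := by
    intro y z
    ext i
    by_cases hij : i = j
    · subst hij; simp [hj]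
    · by_cases hiu : i ∈ u <;> simp [hij, hiu]
  have hxU := (hU.integrable_comp hx.1).mpr hx
  calc ∫ z in Set.Icc (0 : ℝ) 1, partialMean f u (Function.update x j z)
      = ∫ z in Set.Icc (0 : ℝ) 1, ∫ y, f ((u.erase j).piecewise x (Function.update y j z))
          ∂cubeMeasure d := by simp only [partialMean, hswap]
    _ = ∫ p, f ((u.erase j).piecewise x (Function.update p.1 j p.2))
          ∂(cubeMeasure d).prod (volume.restrict (Set.Icc (0 : ℝ) 1)) :=
        (integral_prod_symm _ hxU).symm
    _ = partialMean f (u.erase j) x := hU.integral_comp_of_aestronglyMeasurable hx.1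

theorem integral_anova_update (hf : MemLp f 2 (cubeMeasure d)) {u : Finset (Fin d)} {j : Fin d}
    (hj : j ∈ u) :
    ∀ᵐ x ∂cubeMeasure d, ∫ z in Set.Icc (0 : ℝ) 1, anova f u (Function.update x j z) = 0 := by
  induction u using Finset.strongInduction with
  | H u ih =>
    -- Averaging over `x_j` turns the partial mean over `u` into the one over `u \ {j}`, which is
    -- the sum of the effects `v ⊆ u \ {j}`; the other proper effects average to zero inductively.
    have hsub : (u.ssubsets.filter fun v => j ∉ v) = (u.erase j).powerset := by
      ext v
      simp only [Finset.mem_filter, Finset.mem_ssubsets, Finset.mem_powerset,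
        Finset.subset_erase]
      exact ⟨fun ⟨h, hjv⟩ => ⟨h.subset, hjv⟩,
        fun ⟨h, hjv⟩ => ⟨h.ssubset_of_ne (by rintro rfl; exact hjv hj), hjv⟩⟩
    have hslices : ∀ᵐ x ∂cubeMeasure d, ∀ v ∈ u.ssubsets,
        Integrable (fun z => anova f v (Function.update x j z))
          (volume.restrict (Set.Icc (0 : ℝ) 1)) :=
      (ae_ball_iff u.ssubsets.countable_toSet).mpr fun v _ =>
        ae_integrable_comp_update ((memLp_anova hf v).integrable one_le_two) j
    have hzero : ∀ᵐ x ∂cubeMeasure d, ∀ v ∈ u.ssubsets.filter (j ∈ ·),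
        ∫ z in Set.Icc (0 : ℝ) 1, anova f v (Function.update x j z) = 0 :=
      (ae_ball_iff (Finset.countable_toSet _)).mpr fun v hv =>
        ih v (Finset.mem_ssubsets.mp (Finset.mem_filter.mp hv).1) (Finset.mem_filter.mp hv).2
    filter_upwards [hslices, hzero, integral_partialMean_update (hf.integrable one_le_two) hj,
      ae_integrable_comp_update ((memLp_partialMean hf u).integrable one_le_two) j]
      with x hslices hzero hmean hint
    have hlower : ∑ v ∈ u.ssubsets, ∫ z in Set.Icc (0 : ℝ) 1, anova f v (Function.update x j z) =
        ∑ v ∈ (u.erase j).powerset, anova f v x := by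
      rw [← Finset.sum_filter_add_sum_filter_not _ (j ∈ ·), Finset.sum_eq_zero hzero, zero_add,
        hsub]
      refine Finset.sum_congr rfl fun v hv => ?_
      have hjv : j ∉ v := fun h => Finset.notMem_erase j u (Finset.mem_powerset.mp hv h)
      simp [anova_update_of_notMem f hjv]
    simp only [anova_eq_partialMean_sub f u]
    rw [integral_sub hint (integrable_finsetSum _ hslices), integral_finsetSum _ hslices, hlower,
      hmean, sum_powerset_anova, sub_self]

theorem integral_anova_mul_anova_of_mem_of_notMem (hf : MemLp f 2 (cubeMeasure d))
    {u v : Finset (Fin d)} {k : Fin d} (hku : k ∈ u) (hkv : k ∉ v) :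
    ∫ x, anova f u x * anova f v x ∂cubeMeasure d = 0 := by
  refine (integral_eq_integral_integral_update
    ((memLp_anova hf u).integrable_mul (memLp_anova hf v)) k).trans (integral_eq_zero_of_ae ?_)
  filter_upwards [integral_anova_update hf hku] with x hx
  simp [anova_update_of_notMem f hkv, integral_mul_const, hx]

theorem integral_anova_mul_anova_eq_zero (hf : MemLp f 2 (cubeMeasure d))
    {u v : Finset (Fin d)} (huv : u ≠ v) :
    ∫ x, anova f u x * anova f v x ∂cubeMeasure d = 0 := by
  by_cases hvu : v ⊆ u
  · obtain ⟨k, hku, hkv⟩ := Finset.not_subset.mp fun h => huv (h.antisymm hvu)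
    exact integral_anova_mul_anova_of_mem_of_notMem hf hku hkv
  · obtain ⟨k, hkv, hku⟩ := Finset.not_subset.mp hvu
    simp_rw [mul_comm (anova f u _)]
    exact integral_anova_mul_anova_of_mem_of_notMem hf hkv hku

theorem integral_sum_anova_mem_update (hf : MemLp f 2 (cubeMeasure d)) (j : Fin d) :
    ∀ᵐ x ∂cubeMeasure d, ∫ z in Set.Icc (0 : ℝ) 1,
      ∑ u ∈ Finset.univ.filter (fun u : Finset (Fin d) => j ∈ u),
        anova f u (Function.update x j z) = 0 := by
  set S := Finset.univ.filter (fun u : Finset (Fin d) => j ∈ u)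
  filter_upwards [(ae_ball_iff S.countable_toSet).mpr fun u _ =>
      ae_integrable_comp_update ((memLp_anova hf u).integrable one_le_two) j,
    (ae_ball_iff S.countable_toSet).mpr fun u hu =>
      integral_anova_update hf (Finset.mem_filter.mp hu).2] with x hint hzero
  rw [integral_finsetSum S hint]
  exact Finset.sum_eq_zero hzero

/-- Jansen's identity: for `f ∈ L²([0,1]^d)` and a coordinate `j`,
the total Sobol' index `τ̄_j² = ∑_{u : j ∈ u} σ_u²` equals
`(1/2)∫∫ (f(x) − f(x_{−j}:z_j))² dz_j dx`, where `x_{−j}:z_j` replaces the `j`-th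
coordinate of `x` by `z_j`. -/
theorem stmt_4 {d : ℕ} (f : (Fin d → ℝ) → ℝ) (hf : MemLp f 2 (cubeMeasure d))
    (j : Fin d) :
    ∑ u ∈ Finset.univ.filter (fun u : Finset (Fin d) => j ∈ u),
        ∫ x, (anova f u x) ^ 2 ∂cubeMeasure d
      = (1 / 2) *
          ∫ x, (∫ z in Set.Icc (0 : ℝ) 1, (f x - f (Function.update x j z)) ^ 2)
            ∂cubeMeasure d := by
  set S := Finset.univ.filter (fun u : Finset (Fin d) => j ∈ u)
  set g : (Fin d → ℝ) → ℝ := fun x => ∑ u ∈ S, anova f u x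
  have hg : MemLp g 2 (cubeMeasure d) := memLp_finsetSum S fun u _ => memLp_anova hf u
  have hdiff : ∀ x z, f x - f (Function.update x j z) = g x - g (Function.update x j z) := by
    intro x z
    rw [← sum_anova_mem_add_partialMean_erase f j x,
      ← sum_anova_mem_add_partialMean_erase f j (Function.update x j z),
      partialMean_update_of_notMem f (Finset.notMem_erase j _)]
    ring
  have hjansen : ∫ x, (∫ z in Set.Icc (0 : ℝ) 1, (g x - g (Function.update x j z)) ^ 2)
      ∂cubeMeasure d = 2 * ∫ x, g x ^ 2 ∂cubeMeasure d :=
    integral_integral_sq_sub_update hg j (integral_sum_anova_mem_update hf j)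
  simp_rw [hdiff]
  rw [← integral_sq_sum_of_orthogonal S (fun u _ => memLp_anova hf u)
      fun u _ v _ huv => integral_anova_mul_anova_eq_zero hf huv, hjansen]
  ring
end
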